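/- arXiv:1310.7562 — 4 statements merged into one kernel-verified Lean document; each statement's English description precedes it below -/
import Mathlib

section
/- If f is an α-endomorphism of A₁(F) with f(x) = Ax + By + C, f(y) = Bx + Ay + C for scalars A, B, C ∈ F with A² - B² = 1, then f is an automorphism of A₁(F). -/
noncomputable section

open scoped BigOperators

/-- Defining relation of the first Weyl algebra: `y*x = x*y + 1`. -/
inductive WeylRel (F : Type) [Field F] :
    FreeAlgebra F (Fin 2) → FreeAlgebra F (Fin 2) → Prop
  | rel : WeylRel F (FreeAlgebra.ι F 1 * FreeAlgebra.ι F 0)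
      (FreeAlgebra.ι F 0 * FreeAlgebra.ι F 1 + 1)

/-- The first Weyl algebra `A₁(F)`. -/
abbrev Weyl (F : Type) [Field F] : Type := RingQuot (WeylRel F)

/-- The generator `x` of `A₁(F)`. -/
def Wx (F : Type) [Field F] : Weyl F :=
  RingQuot.mkAlgHom F (WeylRel F) (FreeAlgebra.ι F 0)

/-- The generator `y` of `A₁(F)`. -/
def Wy (F : Type) [Field F] : Weyl F :=
  RingQuot.mkAlgHom F (WeylRel F) (FreeAlgebra.ι F 1)

variable (F : Type) [Field F]

lemma weyl_comm : Wy F * Wx F = Wx F * Wy F + 1 := by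
  have := RingQuot.mkAlgHom_rel F (WeylRel.rel (F := F))
  simpa [Wx, Wy, map_mul, map_add, map_one] using this

lemma weyl_hom_ext {S : Type*} [Semiring S] [Algebra F S]
    (g h : Weyl F →ₐ[F] S) (hx : g (Wx F) = h (Wx F)) (hy : g (Wy F) = h (Wy F)) :
    g = h := by
  apply RingQuot.ringQuot_ext'
  apply FreeAlgebra.hom_ext
  funext i
  fin_cases i
  · simpa [Wx] using hx
  · simpa [Wy] using hy

-- key commutator computation
lemma comm_calc (a b c a' b' c' : F) (h : a * b' - a' * b = 1) :
    (a' • Wx F + b' • Wy F + algebraMap F (Weyl F) c') *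
      (a • Wx F + b • Wy F + algebraMap F (Weyl F) c) =
    (a • Wx F + b • Wy F + algebraMap F (Weyl F) c) *
      (a' • Wx F + b' • Wy F + algebraMap F (Weyl F) c') + 1 := by
  have hc := weyl_comm F
  simp only [add_mul, mul_add, smul_mul_assoc, mul_smul_comm, smul_smul, hc,
    Algebra.commutes, Algebra.algebraMap_eq_smul_one, smul_mul_assoc, one_mul, mul_one,
    smul_add]
  match_scalars <;> first | ring1 | linear_combination h | linear_combination -h | linear_combination 2*h | linear_combination -2*h

/-- An α-endomorphism of the affine form
`f(x) = Ax + By + C`, `f(y) = Bx + Ay + C` with `A² - B² = 1` is an automorphism. -/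

theorem affine_alpha_endo_is_auto (F : Type) [Field F] [CharZero F]
    (α : Weyl F →ₗ[F] Weyl F)
    (hαanti : ∀ a b : Weyl F, α (a * b) = α b * α a)
    (hα2 : ∀ w : Weyl F, α (α w) = w)
    (hαx : α (Wx F) = Wy F) (hαy : α (Wy F) = Wx F)
    (f : Weyl F →ₐ[F] Weyl F) (hf : ∀ w : Weyl F, f (α w) = α (f w))
    (A B C : F)
    (hfx : f (Wx F) = A • Wx F + B • Wy F + algebraMap F (Weyl F) C)
    (hfy : f (Wy F) = B • Wx F + A • Wy F + algebraMap F (Weyl F) C)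
    (hAB : A ^ 2 - B ^ 2 = 1) :
    Function.Bijective f := by
  set c : F := (B - A) * C with hc
  set gx : Weyl F := A • Wx F + (-B) • Wy F + algebraMap F (Weyl F) c with hgx
  set gy : Weyl F := (-B) • Wx F + A • Wy F + algebraMap F (Weyl F) c with hgy
  have hrel : (FreeAlgebra.lift F ![gx, gy]) (FreeAlgebra.ι F 1 * FreeAlgebra.ι F 0)
      = (FreeAlgebra.lift F ![gx, gy]) (FreeAlgebra.ι F 0 * FreeAlgebra.ι F 1 + 1) := by
    simp only [map_mul, map_add, map_one, FreeAlgebra.lift_ι_apply,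
      Matrix.cons_val_zero, Matrix.cons_val_one, Matrix.head_cons]
    rw [hgx, hgy]
    exact comm_calc F A (-B) c (-B) A c (by linear_combination hAB)
  set g : Weyl F →ₐ[F] Weyl F :=
    RingQuot.liftAlgHom F ⟨FreeAlgebra.lift F ![gx, gy],
      fun x y h => by cases h; exact hrel⟩ with hg
  have hgWx : g (Wx F) = gx := by
    rw [hg, Wx, RingQuot.liftAlgHom_mkAlgHom_apply]
    simp
  have hgWy : g (Wy F) = gy := by
    rw [hg, Wy, RingQuot.liftAlgHom_mkAlgHom_apply]
    simp
  have hgf : g.comp f = AlgHom.id F (Weyl F) := by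
    apply weyl_hom_ext
    · simp only [AlgHom.comp_apply, AlgHom.id_apply, hfx, map_add, map_smul,
        AlgHom.commutes, hgWx, hgWy, hgx, hgy]
      rw [hc]
      simp only [Algebra.algebraMap_eq_smul_one]
      match_scalars <;> (first | ring1 | linear_combination hAB | linear_combination -hAB | linear_combination C*hAB | linear_combination -C*hAB)
    · simp only [AlgHom.comp_apply, AlgHom.id_apply, hfy, map_add, map_smul,
        AlgHom.commutes, hgWx, hgWy, hgx, hgy]
      rw [hc]
      simp only [Algebra.algebraMap_eq_smul_one]
      match_scalars <;> (first | ring1 | linear_combination hAB | linear_combination -hAB | linear_combination C*hAB | linear_combination -C*hAB)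
  have hfg : f.comp g = AlgHom.id F (Weyl F) := by
    apply weyl_hom_ext
    · simp only [AlgHom.comp_apply, AlgHom.id_apply, hgWx, hgWy, hgx, hgy, map_add,
        map_smul, AlgHom.commutes, hfx, hfy]
      rw [hc]
      simp only [Algebra.algebraMap_eq_smul_one]
      match_scalars <;> (first | ring1 | linear_combination hAB | linear_combination -hAB | linear_combination C*hAB | linear_combination -C*hAB)
    · simp only [AlgHom.comp_apply, AlgHom.id_apply, hgWx, hgWy, hgx, hgy, map_add,
        map_smul, AlgHom.commutes, hfx, hfy]
      rw [hc]
      simp only [Algebra.algebraMap_eq_smul_one]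
      match_scalars <;> (first | ring1 | linear_combination hAB | linear_combination -hAB | linear_combination C*hAB | linear_combination -C*hAB)
  refine Function.bijective_iff_has_inverse.2 ⟨g, fun w => ?_, fun w => ?_⟩
  · exact congrArg (fun h : Weyl F →ₐ[F] Weyl F => h w) hgf
  · exact congrArg (fun h : Weyl F →ₐ[F] Weyl F => h w) hfg
end
end

section
/- Let p > 2 be prime and let w ∈ A₁(F) be the image of (aX + bY)^p ∈ F[X,Y] with w ≠ 0. If w is symmetric with respect to the exchange involution α then a = b, and if w is antisymmetric then a = -b. -/
noncomputable section

open scoped BigOperators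

variable (F : Type) [Field F]

def WM : Module.End F (Polynomial F) := LinearMap.mulLeft F Polynomial.X
def WD : Module.End F (Polynomial F) := Polynomial.derivative

lemma wrel : WD F * WM F = WM F * WD F + 1 := by
  refine LinearMap.ext fun f => ?_
  simp [WD, WM, Module.End.mul_apply, Polynomial.derivative_mul, add_comm]

def wrep : Weyl F →ₐ[F] Module.End F (Polynomial F) :=
  RingQuot.liftAlgHom F ⟨FreeAlgebra.lift F ![WM F, WD F], by
    rintro _ _ ⟨⟩
    simp [wrel]⟩

lemma wrep_x : wrep F (Wx F) = WM F := by
  simp [wrep, Wx, RingQuot.liftAlgHom_mkAlgHom_apply]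

lemma wrep_y : wrep F (Wy F) = WD F := by
  simp [wrep, Wy, RingQuot.liftAlgHom_mkAlgHom_apply]

lemma weyl_indep [CharZero F] (p : ℕ) (c : ℕ → F)
    (h : ∑ k ∈ Finset.range (p + 1), c k • (Wx F ^ (p - k) * Wy F ^ k) = 0) :
    ∀ k ∈ Finset.range (p + 1), c k = 0 := by
  intro k0 hk0
  rw [Finset.mem_range] at hk0
  have h2 : ∑ k ∈ Finset.range (p + 1),
      c k • (WM F ^ (p - k) * WD F ^ k) = 0 := by
    have := congrArg (wrep F) h
    simpa [map_sum, map_mul, map_pow, wrep_x, wrep_y] using this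
  have h3 := congrArg (fun T : Module.End F (Polynomial F) => T (Polynomial.X ^ p)) h2
  simp only [LinearMap.sum_apply, LinearMap.smul_apply, Module.End.mul_apply,
    LinearMap.zero_apply] at h3
  have hterm : ∀ k, (WM F ^ (p - k)) ((WD F ^ k) (Polynomial.X ^ p))
      = ((p.descFactorial k : F)) • (Polynomial.X : Polynomial F) ^ ((p - k) + (p - k)) := by
    intro k
    have hD : (WD F ^ k) ((Polynomial.X : Polynomial F) ^ p)
        = (p.descFactorial k : F) • (Polynomial.X : Polynomial F) ^ (p - k) := by
      rw [Module.End.pow_apply]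
      show (⇑(Polynomial.derivative (R := F)))^[k] (Polynomial.X ^ p) = _
      rw [Polynomial.iterate_derivative_X_pow_eq_smul]
    have hM : WM F ^ (p - k) = LinearMap.mulLeft F ((Polynomial.X : Polynomial F) ^ (p - k)) := by
      rw [WM, LinearMap.pow_mulLeft]
    rw [hD, hM, LinearMap.mulLeft_apply, mul_smul_comm, pow_add]
  simp only [hterm] at h3
  have h4 := congrArg (fun q : Polynomial F => q.coeff ((p - k0) + (p - k0))) h3
  simp only [Polynomial.finset_sum_coeff, Polynomial.coeff_smul, Polynomial.coeff_X_pow,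
    smul_eq_mul, Polynomial.coeff_zero] at h4
  rw [Finset.sum_eq_single k0] at h4
  · simp at h4
    rcases h4 with h4 | h4
    · exact h4
    · omega
  · intro k hk hne
    rw [Finset.mem_range] at hk
    have hne2 : ¬ (p - k0 + (p - k0) = p - k + (p - k)) := by omega
    simp [hne2]
  · intro hk
    exact absurd (Finset.mem_range.mpr (by omega)) hk

/-- Let `p > 2` be prime and `w` the image of `(aX + bY)^p` in `A₁(F)`,
`w ≠ 0`. If `w` is symmetric then `a = b`; if antisymmetric then `a = -b`. -/
theorem power_symm_antisymm (F : Type) [Field F] [CharZero F]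
    (α : Weyl F →ₗ[F] Weyl F)
    (hαanti : ∀ a b : Weyl F, α (a * b) = α b * α a)
    (hα2 : ∀ w : Weyl F, α (α w) = w)
    (hαx : α (Wx F) = Wy F) (hαy : α (Wy F) = Wx F)
    (p : ℕ) (hp : p.Prime) (hp2 : 2 < p) (a b : F) (w : Weyl F)
    (hw : w = ∑ k ∈ Finset.range (p + 1),
      ((p.choose k : F) * a ^ (p - k) * b ^ k) • (Wx F ^ (p - k) * Wy F ^ k))
    (hw0 : w ≠ 0) :
    (α w = w → a = b) ∧ (α w = -w → a = -b) := by
  classical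
  -- α fixes 1
  have h1 : ∀ v : Weyl F, α v = α v * α 1 := by
    intro v
    have := hαanti 1 v
    simpa using this
  have hα1 : α 1 = 1 := by
    have := h1 (α 1)
    rw [hα2, one_mul] at this
    exact this.symm
  -- α on powers
  have hαypow : ∀ k : ℕ, α (Wy F ^ k) = Wx F ^ k := by
    intro k
    induction k with
    | zero => simpa using hα1
    | succ n ih => rw [pow_succ, hαanti, hαy, ih, ← pow_succ']
  have hαxpow : ∀ k : ℕ, α (Wx F ^ k) = Wy F ^ k := by
    intro k
    induction k with
    | zero => simpa using hα1
    | succ n ih => rw [pow_succ, hαanti, hαx, ih, ← pow_succ']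
  -- compute α w
  have hαw : α w = ∑ k ∈ Finset.range (p + 1),
      ((p.choose k : F) * a ^ k * b ^ (p - k)) • (Wx F ^ (p - k) * Wy F ^ k) := by
    rw [hw, map_sum]
    have e1 : ∀ k ∈ Finset.range (p + 1),
        α (((p.choose k : F) * a ^ (p - k) * b ^ k) • (Wx F ^ (p - k) * Wy F ^ k))
        = ((p.choose k : F) * a ^ (p - k) * b ^ k) • (Wx F ^ k * Wy F ^ (p - k)) := by
      intro k hk
      rw [map_smul, hαanti, hαypow, hαxpow]
    rw [Finset.sum_congr rfl e1]
    have e2 := (Finset.sum_range_reflect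
      (fun k => ((p.choose k : F) * a ^ (p - k) * b ^ k) • (Wx F ^ k * Wy F ^ (p - k)))
      (p + 1)).symm
    rw [e2]
    apply Finset.sum_congr rfl
    intro j hj
    rw [Finset.mem_range] at hj
    have h1' : p + 1 - 1 - j = p - j := by omega
    have h2' : p - (p - j) = j := by omega
    have h3' : p.choose (p - j) = p.choose j := Nat.choose_symm (by omega)
    rw [h1', h2', h3']
  -- main coefficient identity
  have main : ∀ ε : F, α w = ε • w → ∀ k, k ≤ p →
      (p.choose k : F) * a ^ k * b ^ (p - k) = ε * ((p.choose k : F) * a ^ (p - k) * b ^ k) := by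
    intro ε hε k hk
    have hz : ∑ k ∈ Finset.range (p + 1),
        (((p.choose k : F) * a ^ k * b ^ (p - k))
          - ε * ((p.choose k : F) * a ^ (p - k) * b ^ k)) • (Wx F ^ (p - k) * Wy F ^ k)
        = 0 := by
      have hz' : α w - ε • w = 0 := by rw [hε, sub_self]
      rw [hαw, hw, Finset.smul_sum, ← Finset.sum_sub_distrib] at hz'
      simp only [smul_smul] at hz'
      rw [Finset.sum_congr rfl (fun x _ => sub_smul ((p.choose x : F) * a ^ x * b ^ (p - x))
        (ε * ((p.choose x : F) * a ^ (p - x) * b ^ x)) (Wx F ^ (p - x) * Wy F ^ x))]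
      exact hz'
    have := weyl_indep F p _ hz k (Finset.mem_range.mpr (by omega))
    exact sub_eq_zero.mp this
  -- odd decomposition
  obtain ⟨m, hm⟩ := hp.odd_of_ne_two (by omega)
  have hmp : m ≤ p := by omega
  have hCm : (p.choose m : F) ≠ 0 :=
    Nat.cast_ne_zero.mpr (Nat.choose_pos hmp).ne'
  constructor
  · intro hsym
    have hmain := main 1 (by rw [one_smul]; exact hsym)
    have h0 := hmain 0 (by omega)
    simp at h0  -- b ^ p = a ^ p
    have hmid := hmain m hmp
    rw [one_mul] at hmid
    have hmid2 : a ^ m * b ^ (p - m) = a ^ (p - m) * b ^ m :=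
      mul_left_cancel₀ hCm (by rw [← mul_assoc, ← mul_assoc]; exact hmid)
    by_cases hb : b = 0
    · have : a ^ p = 0 := by rw [← h0, hb]; exact zero_pow (by omega)
      have ha : a = 0 := pow_eq_zero_iff (by omega) |>.mp this
      rw [ha, hb]
    · have hbp : b ^ p ≠ 0 := pow_ne_zero _ hb
      have ha : a ≠ 0 := by
        intro h
        rw [h0, h] at hbp
        exact hbp (zero_pow (by omega))
      have hpm : p - m = m + 1 := by omega
      rw [hpm] at hmid2
      have key : (a ^ m * b ^ m) * b = (a ^ m * b ^ m) * a := by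
        rw [pow_succ, pow_succ] at hmid2
        linear_combination hmid2
      exact (mul_left_cancel₀ (mul_ne_zero (pow_ne_zero _ ha) (pow_ne_zero _ hb)) key).symm
  · intro hanti
    have hneg : (-1 : F) • w = -w := neg_one_smul F w
    have hmain := main (-1) (by rw [hneg]; exact hanti)
    have h0 := hmain 0 (by omega)
    simp at h0  -- b ^ p = -(a ^ p)  (or similar)
    have hmid := hmain m hmp
    have hmid2 : a ^ m * b ^ (p - m) = -(a ^ (p - m) * b ^ m) := by
      apply mul_left_cancel₀ hCm
      rw [← mul_assoc, mul_neg, ← mul_assoc]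
      linear_combination hmid
    by_cases hb : b = 0
    · have hap : a ^ p = 0 := by
        rw [hb, zero_pow (by omega : p ≠ 0)] at h0
        exact neg_eq_zero.mp h0.symm
      have ha : a = 0 := pow_eq_zero_iff (by omega : p ≠ 0) |>.mp hap
      rw [ha, hb, neg_zero]
    · have hbp : b ^ p ≠ 0 := pow_ne_zero _ hb
      have ha : a ≠ 0 := by
        intro h
        rw [h, zero_pow (by omega : p ≠ 0)] at h0
        rw [neg_zero] at h0
        exact hb (pow_eq_zero_iff (by omega : p ≠ 0) |>.mp h0)
      have hpm : p - m = m + 1 := by omega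
      rw [hpm] at hmid2
      have key : (a ^ m * b ^ m) * b = (a ^ m * b ^ m) * (-a) := by
        rw [pow_succ, pow_succ] at hmid2
        linear_combination hmid2
      have := mul_left_cancel₀ (mul_ne_zero (pow_ne_zero _ ha) (pow_ne_zero _ hb)) key
      rw [this]; ring
end
end

section
/- There exists no antisymmetric (1,1)-homogeneous element K of odd (1,1)-degree 2j+1 ≥ 3 in A₁(F) other than 0 satisfying ∂K/∂y - ∂K/∂x = 0; i.e., if K = Σ_{i=0}^{j} dᵢ (x^{2j+1-i} y^i - x^i y^{2j+1-i}) satisfies ∂K/∂y = ∂K/∂x, then all dᵢ = 0. -/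
noncomputable section

open scoped BigOperators

open Polynomial

variable (F : Type) [Field F]

def Mx : Module.End F (Polynomial F) := LinearMap.mulLeft F Polynomial.X
def Dy : Module.End F (Polynomial F) := Polynomial.derivative

lemma rel_holds : Dy F * Mx F = Mx F * Dy F + 1 := by
  apply LinearMap.ext; intro p
  simp [Mx, Dy, Module.End.mul_apply, Polynomial.derivative_mul]
  ring

def phi : Weyl F →ₐ[F] Module.End F (Polynomial F) :=
  RingQuot.liftAlgHom F ⟨FreeAlgebra.lift F ![Mx F, Dy F], by
    rintro a b ⟨⟩
    simp only [map_mul, map_add, map_one, FreeAlgebra.lift_ι_apply]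
    show Dy F * Mx F = Mx F * Dy F + 1
    exact rel_holds F⟩

lemma phi_Wx : phi F (Wx F) = Mx F := by
  rw [Wx, phi, RingQuot.liftAlgHom_mkAlgHom_apply]
  simp [FreeAlgebra.lift_ι_apply]

lemma phi_Wy : phi F (Wy F) = Dy F := by
  rw [Wy, phi, RingQuot.liftAlgHom_mkAlgHom_apply]
  simp [FreeAlgebra.lift_ι_apply]

lemma phi_mono (a b m : ℕ) : phi F (Wx F ^ a * Wy F ^ b) (X ^ m) =
    (m.descFactorial b : F) • X ^ (a + (m - b)) := by
  rw [map_mul, map_pow (phi F) (Wx F) a, map_pow (phi F) (Wy F) b, phi_Wx, phi_Wy]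
  have h1 : ((Dy F)^b) (X ^ m : Polynomial F) = (m.descFactorial b : F) • X ^ (m - b) := by
    rw [Module.End.pow_apply]; exact Polynomial.iterate_derivative_X_pow_eq_smul m b
  have h2 : (Mx F)^a = LinearMap.mulLeft F ((X : Polynomial F) ^ a) :=
    LinearMap.pow_mulLeft (R := F) (A := Polynomial F) Polynomial.X a
  rw [Module.End.mul_apply, h2, LinearMap.mulLeft_apply, h1, mul_smul_comm, ← pow_add]


/-- There is no nonzero antisymmetric (1,1)-homogeneous element
`K = Σᵢ dᵢ (x^(2j+1-i) y^i - x^i y^(2j+1-i))` of odd degree `2j+1 ≥ 3` with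
`∂K/∂y = ∂K/∂x` (formal derivatives on normal forms): all `dᵢ` vanish. -/
theorem no_antisymm_with_equal_partials (F : Type) [Field F] [CharZero F]
    (j : ℕ) (hj : 1 ≤ j) (d : ℕ → F)
    (hpartials :
      (∑ i ∈ Finset.range (j + 1), d i •
        ((i : F) • (Wx F ^ (2 * j + 1 - i) * Wy F ^ (i - 1)) -
          ((2 * j + 1 - i : ℕ) : F) • (Wx F ^ i * Wy F ^ (2 * j - i)))) =
      (∑ i ∈ Finset.range (j + 1), d i •
        (((2 * j + 1 - i : ℕ) : F) • (Wx F ^ (2 * j - i) * Wy F ^ i) -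
          (i : F) • (Wx F ^ (i - 1) * Wy F ^ (2 * j + 1 - i))))) :
    ∀ i ≤ j, d i = 0 := by
  have H := congrArg (phi F) hpartials
  have key : ∀ a : ℕ,
    (∑ x ∈ Finset.range (j + 1),
      ((if 2 * a = 2 * j + 1 - x + (2 * j - (x - 1)) then
          d x * ((x : F) * ((2 * j).descFactorial (x - 1) : F)) else 0) -
        if 2 * a = x + (2 * j - (2 * j - x)) then
          d x * (((2 * j + 1 - x : ℕ) : F) * ((2 * j).descFactorial (2 * j - x) : F)) else 0)) =
    (∑ x ∈ Finset.range (j + 1),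
      ((if 2 * a = 2 * j - x + (2 * j - x) then
          d x * (((2 * j + 1 - x : ℕ) : F) * ((2 * j).descFactorial x : F)) else 0) -
        if 2 * a = x - 1 + (2 * j - (2 * j + 1 - x)) then
          d x * ((x : F) * ((2 * j).descFactorial (2 * j + 1 - x) : F)) else 0)) := by
    intro a
    have Ha := congrArg (fun T : Module.End F (Polynomial F) =>
      ((T) (Polynomial.X ^ (2*j))).coeff (2*a)) H
    simp only [map_sum, map_sub, map_smul, LinearMap.sum_apply, LinearMap.smul_apply,
      LinearMap.sub_apply, phi_mono, Polynomial.finset_sum_coeff, Polynomial.coeff_smul,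
      Polynomial.coeff_sub, Polynomial.coeff_X_pow, smul_eq_mul, mul_sub, mul_ite,
      mul_one, mul_zero] at Ha
    exact Ha
  -- d j = 0
  have hdesc : ∀ k, k ≤ 2*j → (((2*j).descFactorial k : ℕ) : F) ≠ 0 := fun k hk =>
    Nat.cast_ne_zero.mpr (by rw [Ne, Nat.descFactorial_eq_zero_iff_lt]; omega)
  -- evaluate the left sum for a ≤ j
  have hL : ∀ a, a ≤ j →
      (∑ x ∈ Finset.range (j + 1),
        ((if 2 * a = 2 * j + 1 - x + (2 * j - (x - 1)) then
            d x * ((x : F) * ((2 * j).descFactorial (x - 1) : F)) else 0) -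
          if 2 * a = x + (2 * j - (2 * j - x)) then
            d x * (((2 * j + 1 - x : ℕ) : F) * ((2 * j).descFactorial (2 * j - x) : F)) else 0)) =
      -(d a * (((2 * j + 1 - a : ℕ) : F) * ((2 * j).descFactorial (2 * j - a) : F))) := by
    intro a ha
    rw [Finset.sum_congr rfl (g := fun x =>
        if x = a then -(d a * (((2 * j + 1 - a : ℕ) : F) * ((2 * j).descFactorial (2 * j - a) : F)))
        else 0) ?_]
    · rw [Finset.sum_ite_eq' (Finset.range (j+1)) a, if_pos (Finset.mem_range.mpr (by omega))]
    · intro x hx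
      simp only [Finset.mem_range] at hx
      beta_reduce
      rw [if_neg (by omega), zero_sub]
      by_cases hxa : x = a
      · subst hxa; rw [if_pos (by omega), if_pos rfl]
      · rw [if_neg (by omega), if_neg hxa, neg_zero]
  -- evaluate the right sum for a < j
  have hR : ∀ a, a < j →
      (∑ x ∈ Finset.range (j + 1),
        ((if 2 * a = 2 * j - x + (2 * j - x) then
            d x * (((2 * j + 1 - x : ℕ) : F) * ((2 * j).descFactorial x : F)) else 0) -
          if 2 * a = x - 1 + (2 * j - (2 * j + 1 - x)) then
            d x * ((x : F) * ((2 * j).descFactorial (2 * j + 1 - x) : F)) else 0)) =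
      -(d (a+1) * (((a + 1 : ℕ) : F) * ((2 * j).descFactorial (2 * j - a) : F))) := by
    intro a ha
    rw [Finset.sum_congr rfl (g := fun x =>
        if x = a + 1 then
          -(d (a+1) * (((a + 1 : ℕ) : F) * ((2 * j).descFactorial (2 * j - a) : F)))
        else 0) ?_]
    · rw [Finset.sum_ite_eq' (Finset.range (j+1)) (a+1), if_pos (Finset.mem_range.mpr (by omega))]
    · intro x hx
      simp only [Finset.mem_range] at hx
      beta_reduce
      rw [if_neg (by omega), zero_sub]
      by_cases hxa : x = a + 1
      · subst hxa
        rw [if_pos (by omega)]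
        have e1 : 2 * j + 1 - (a + 1) = 2 * j - a := by omega
        rw [e1]
        push_cast [e1]
        ring_nf
        simp
      · rcases Nat.eq_zero_or_pos x with hx0 | hx0
        · subst hx0
          simp [hxa]
        · rw [if_neg (by omega), if_neg hxa, neg_zero]
  -- evaluate the right sum for a = j
  have hRj :
      (∑ x ∈ Finset.range (j + 1),
        ((if 2 * j = 2 * j - x + (2 * j - x) then
            d x * (((2 * j + 1 - x : ℕ) : F) * ((2 * j).descFactorial x : F)) else 0) -
          if 2 * j = x - 1 + (2 * j - (2 * j + 1 - x)) then
            d x * ((x : F) * ((2 * j).descFactorial (2 * j + 1 - x) : F)) else 0)) =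
      d j * (((2 * j + 1 - j : ℕ) : F) * ((2 * j).descFactorial j : F)) := by
    rw [Finset.sum_congr rfl (g := fun x =>
        if x = j then d j * (((2 * j + 1 - j : ℕ) : F) * ((2 * j).descFactorial j : F))
        else 0) ?_]
    · rw [Finset.sum_ite_eq' (Finset.range (j+1)) j, if_pos (Finset.mem_range.mpr (by omega))]
    · intro x hx
      simp only [Finset.mem_range] at hx
      beta_reduce
      have h2 : ¬(2 * j = x - 1 + (2 * j - (2 * j + 1 - x))) := by omega
      rw [if_neg h2, sub_zero]
      by_cases hxa : x = j
      · subst hxa; rw [if_pos (by omega), if_pos rfl]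
      · rw [if_neg (by omega), if_neg hxa]
  -- d j = 0
  have hdj : d j = 0 := by
    have h := key j
    rw [hL j le_rfl, hRj] at h
    have e : 2 * j - j = j := by omega
    rw [e] at h
    have h2 : (2 : F) * (d j * (((2 * j + 1 - j : ℕ) : F) * ((2 * j).descFactorial j : F))) = 0 := by
      linear_combination -h
    have hc : (((2 * j + 1 - j : ℕ) : F) * ((2 * j).descFactorial j : F)) ≠ 0 :=
      mul_ne_zero (Nat.cast_ne_zero.mpr (by omega)) (hdesc j (by omega))
    have := mul_eq_zero.mp h2
    rcases this with h3 | h3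
    · exact absurd h3 two_ne_zero
    · rcases mul_eq_zero.mp h3 with h4 | h4
      · exact h4
      · exact absurd h4 hc
  -- recurrence
  have hrec : ∀ a, a < j →
      ((2 * j + 1 - a : ℕ) : F) * d a = ((a + 1 : ℕ) : F) * d (a + 1) := by
    intro a ha
    have h := key a
    rw [hL a ha.le, hR a ha] at h
    have h2 : d a * ((2 * j + 1 - a : ℕ) : F) * ((2 * j).descFactorial (2 * j - a) : F) =
        d (a+1) * ((a + 1 : ℕ) : F) * ((2 * j).descFactorial (2 * j - a) : F) := by
      have h' := neg_injective h
      linear_combination h'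
    have h3 := mul_right_cancel₀ (hdesc (2*j - a) (by omega)) h2
    linear_combination h3
  -- downward induction
  have hall : ∀ k, d (j - k) = 0 := by
    intro k
    induction k with
    | zero => simpa using hdj
    | succ k ih =>
      rcases le_or_gt j k with h | h
      · have e : j - (k + 1) = j - k := by omega
        rw [e]; exact ih
      · have ha : j - (k + 1) < j := by omega
        have e : j - (k + 1) + 1 = j - k := by omega
        have hr := hrec (j - (k+1)) ha
        rw [e, ih, mul_zero] at hr
        have hc : ((2 * j + 1 - (j - (k+1)) : ℕ) : F) ≠ 0 :=
          Nat.cast_ne_zero.mpr (by omega)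
        exact (mul_eq_zero.mp hr).resolve_left hc
  intro i hi
  have := hall (j - i)
  rwa [Nat.sub_sub_self hi] at this
end
end

section
/- Suppose every α-endomorphism of A₁(F) is an automorphism. If f is an algebra endomorphism of A₁(F) and there exist involutions β = g⁻¹αg and γ = h⁻¹αh (with g, h automorphisms of A₁(F)) such that f∘β = γ∘f, then f is an automorphism. -/
noncomputable section

open scoped BigOperators

/-- Assuming the starred Dixmier conjecture (every α-endomorphism is an
automorphism), any endomorphism `f` intertwining two conjugates `β = g⁻¹αg`, `γ = h⁻¹αh`
of the exchange involution (`f ∘ β = γ ∘ f`) is an automorphism. -/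
theorem beta_gamma_endo_is_auto (F : Type) [Field F] [CharZero F]
    (α : Weyl F →ₗ[F] Weyl F)
    (hαanti : ∀ a b : Weyl F, α (a * b) = α b * α a)
    (hα2 : ∀ w : Weyl F, α (α w) = w)
    (hαx : α (Wx F) = Wy F) (hαy : α (Wy F) = Wx F)
    (starred : ∀ f : Weyl F →ₐ[F] Weyl F,
      (∀ w : Weyl F, f (α w) = α (f w)) → Function.Bijective f)
    (f : Weyl F →ₐ[F] Weyl F) (g h : Weyl F ≃ₐ[F] Weyl F)
    (hfβγ : ∀ w : Weyl F, f (g.symm (α (g w))) = h.symm (α (h (f w)))) :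
    Function.Bijective f := by
  set F' : Weyl F →ₐ[F] Weyl F :=
    (h : Weyl F →ₐ[F] Weyl F).comp (f.comp (g.symm : Weyl F →ₐ[F] Weyl F)) with hF'
  have hcomm : ∀ w : Weyl F, F' (α w) = α (F' w) := by
    intro w
    have := hfβγ (g.symm w)
    simp only [AlgEquiv.apply_symm_apply] at this
    have := congrArg h this
    simpa [hF'] using this
  have hbij := starred F' hcomm
  have : (f : Weyl F → Weyl F) =
      (h.symm : Weyl F → Weyl F) ∘ (F' : Weyl F → Weyl F) ∘ (g : Weyl F → Weyl F) := by
    funext w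
    simp [hF']
  rw [this]
  exact h.symm.bijective.comp (hbij.comp g.bijective)
end
end
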